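/- (Corollary 5, safety-critical control of neutral control systems) Let E be a real Banach space, τ > 0, m ∈ ℕ, 𝓕 : C([-τ,0], E) × C([-τ,0], E) → E, and 𝓖 : C([-τ,0], E) × C([-τ,0], E) → L(ℝᵐ, E). Let u : ℝ → ℝᵐ and let x : ℝ → E be continuously differentiable satisfying the neutral closed-loop dynamics ẋ(t) = 𝓕(x_t, ẋ_t) + 𝓖(x_t, ẋ_t)(u(t)) for all t ≥ 0, where x_t(θ) = x(t+θ) and ẋ_t(θ) = x'(t+θ). Let 𝓗 : C([-τ,0], E) → ℝ be Fréchet differentiable and let α : ℝ → ℝ be continuous, strictly increasing with α(0) = 0. Suppose that for all t ≥ 0, D𝓗(x_t)(ẋ_t) ≥ -α(𝓗(x_t)). If 𝓗(x_0) ≥ 0, then 𝓗(x_t) ≥ 0 for all t ≥ 0. -/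

import Mathlib

/-!
Since `x'` is continuous, so is `t ↦ x'_t` in the sup norm, and the mean value inequality applied
uniformly in `θ` shows that `t ↦ x_t` is differentiable in `C([-τ,0], E)` with derivative `x'_t`.
Hence `h t = 𝓗(x_t)` is differentiable with `h' t = D𝓗(x_t)(x'_t) ≥ -α(h t)`, which is positive
wherever `h t < 0`. So after the last time `c ≤ t` at which `h c ≥ 0`, `h` increases on `[c, t]`
and `h t < 0` is impossible.
-/

/-- History segment `x_t ∈ C([-τ,0], E)` of a continuous curve `x : ℝ → E`,
defined by `x_t θ = x (t + θ)`. -/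
noncomputable def histSegment {E : Type*} [NormedAddCommGroup E]
    (τ : ℝ) (x : ℝ → E) (hx : Continuous x) (t : ℝ) :
    C(Set.Icc (-τ) (0 : ℝ), E) :=
  ⟨fun θ => x (t + θ), hx.comp (continuous_const.add continuous_subtype_val)⟩

open Set

section ContinuousMapDeriv

variable {K E : Type*} [TopologicalSpace K] [CompactSpace K]
  [NormedAddCommGroup E] [NormedSpace ℝ E]

theorem ContinuousMap.hasDerivAt_of_hasDerivAt_apply {f f' : ℝ → C(K, E)} {t : ℝ}
    (hf : ∀ s k, HasDerivAt (fun s => f s k) (f' s k) s) (hf' : ContinuousAt f' t) :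
    HasDerivAt f (f' t) t := by
  rw [hasDerivAt_iff_isLittleO, Asymptotics.isLittleO_iff]
  intro ε hε
  obtain ⟨δ, hδ, hclose⟩ := Metric.continuousAt_iff.1 hf' ε hε
  filter_upwards [Metric.ball_mem_nhds t hδ] with y hy
  refine (ContinuousMap.norm_le _ (by positivity)).2 fun k => ?_
  have hderiv : ∀ s ∈ uIcc t y, HasDerivWithinAt (fun s => f s k - s • f' t k)
      (f' s k - f' t k) (uIcc t y) s := fun s _ => by
    have := (hf s k).sub ((hasDerivAt_id' s).smul_const (f' t k))
    rw [one_smul] at this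
    exact this.hasDerivWithinAt
  have hbound : ∀ s ∈ uIcc t y, ‖f' s k - f' t k‖ ≤ ε := fun s hs => by
    have hst : dist s t < δ := by
      rw [Real.dist_eq]
      exact (abs_sub_left_of_mem_uIcc hs).trans_lt hy
    calc ‖f' s k - f' t k‖ ≤ ‖f' s - f' t‖ := (f' s - f' t).norm_coe_le_norm k
      _ = dist (f' s) (f' t) := (dist_eq_norm _ _).symm
      _ ≤ ε := (hclose hst).le
  calc ‖(f y - f t - (y - t) • f' t) k‖
      = ‖f y k - y • f' t k - (f t k - t • f' t k)‖ := by
        congr 1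
        simp only [ContinuousMap.sub_apply, ContinuousMap.smul_apply, sub_smul]
        abel
    _ ≤ ε * ‖y - t‖ := (convex_uIcc t y).norm_image_sub_le_of_norm_hasDerivWithin_le hderiv
        hbound left_mem_uIcc right_mem_uIcc

end ContinuousMapDeriv

section HistorySegment

variable {E : Type*} [NormedAddCommGroup E]

theorem continuous_histSegment (τ : ℝ) {x : ℝ → E} (hx : Continuous x) :
    Continuous (histSegment τ x hx) :=
  ContinuousMap.continuous_of_continuous_uncurry _ <|
    hx.comp (continuous_fst.add (continuous_subtype_val.comp continuous_snd))

theorem hasDerivAt_histSegment [NormedSpace ℝ E] (τ : ℝ) {x x' : ℝ → E} (hx : Continuous x)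
    (hx' : Continuous x') (hd : ∀ t, HasDerivAt x (x' t) t) (t : ℝ) :
    HasDerivAt (histSegment τ x hx) (histSegment τ x' hx' t) t :=
  ContinuousMap.hasDerivAt_of_hasDerivAt_apply
    (fun s θ => (hd (s + θ)).comp_add_const s θ)
    (continuous_histSegment τ hx').continuousAt

end HistorySegment

theorem nonneg_of_hasDerivAt_pos_of_neg {φ φ' : ℝ → ℝ} {a b : ℝ}
    (hφ : ContinuousOn φ (Icc a b)) (hφ' : ∀ s ∈ Ioo a b, HasDerivAt φ (φ' s) s)
    (hpos : ∀ s ∈ Ioo a b, φ s < 0 → 0 < φ' s) (ha : 0 ≤ φ a) :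
    ∀ t ∈ Icc a b, 0 ≤ φ t := by
  intro t ht
  by_contra! hneg
  set S := Icc a t ∩ φ ⁻¹' Ici 0
  have hS : IsClosed S :=
    (hφ.mono (Icc_subset_Icc_right ht.2)).preimage_isClosed_of_isClosed isClosed_Icc isClosed_Ici
  have hSbdd : BddAbove S := bddAbove_Icc.mono inter_subset_left
  set c := sSup S
  obtain ⟨⟨hac, hct⟩, hc⟩ : c ∈ S := hS.csSup_mem ⟨a, ⟨le_rfl, ht.1⟩, ha⟩ hSbdd
  have hct : c < t := hct.lt_of_ne fun h => (h ▸ hneg).not_ge hc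
  have hsub : Ioo c t ⊆ Ioo a b := Ioo_subset_Ioo hac ht.2
  have hneg_between : ∀ s ∈ Ioo c t, φ s < 0 := fun s hs =>
    not_le.1 fun h => (le_csSup hSbdd ⟨⟨hac.trans hs.1.le, hs.2.le⟩, h⟩).not_gt hs.1
  have hmono : StrictMonoOn φ (Icc c t) := by
    refine strictMonoOn_of_hasDerivWithinAt_pos (f' := φ') (convex_Icc c t)
      (hφ.mono (Icc_subset_Icc hac ht.2)) (fun s hs => ?_) (fun s hs => ?_) <;>
      rw [interior_Icc] at hs
    · exact (hφ' s (hsub hs)).hasDerivWithinAt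
    · exact hpos s (hsub hs) (hneg_between s hs)
  have := hmono ⟨le_rfl, hct.le⟩ ⟨hct.le, le_rfl⟩ hct
  linarith [show 0 ≤ φ c from hc]

theorem statement11_general (E : Type*) [NormedAddCommGroup E] [NormedSpace ℝ E]
    (τ : ℝ) (x x' : ℝ → E) (hx : Continuous x) (hx' : Continuous x')
    (hd : ∀ t : ℝ, HasDerivAt x (x' t) t)
    (H : C(Set.Icc (-τ) (0 : ℝ), E) → ℝ)
    (DH : C(Set.Icc (-τ) (0 : ℝ), E) → (C(Set.Icc (-τ) (0 : ℝ), E) →L[ℝ] ℝ))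
    (hH : ∀ φ : C(Set.Icc (-τ) (0 : ℝ), E), HasFDerivAt H (DH φ) φ)
    (α : ℝ → ℝ) (hα_mono : StrictMono α) (hα0 : α 0 = 0)
    (hsafe : ∀ t ≥ (0 : ℝ),
      DH (histSegment τ x hx t) (histSegment τ x' hx' t) ≥ -α (H (histSegment τ x hx t)))
    (h0 : H (histSegment τ x hx 0) ≥ 0) :
    ∀ t ≥ (0 : ℝ), H (histSegment τ x hx t) ≥ 0 := by
  have hderiv : ∀ s, HasDerivAt (fun s => H (histSegment τ x hx s))
      (DH (histSegment τ x hx s) (histSegment τ x' hx' s)) s := fun s =>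
    (hH _).comp_hasDerivAt s (hasDerivAt_histSegment τ hx hx' hd s)
  have hpos : ∀ s > 0, H (histSegment τ x hx s) < 0 →
      0 < DH (histSegment τ x hx s) (histSegment τ x' hx' s) := fun s hs hneg => by
    have hα_neg : α (H (histSegment τ x hx s)) < 0 := hα0 ▸ hα_mono hneg
    linarith [hsafe s hs.le]
  intro t ht
  exact nonneg_of_hasDerivAt_pos_of_neg (fun s _ => (hderiv s).continuousAt.continuousWithinAt)
    (fun s _ => hderiv s) (fun s hs => hpos s hs.1) h0 t ⟨ht, le_rfl⟩

/-- Corollary 5: safety-critical control of neutral control systems. If `x` satisfies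
the neutral closed loop `ẋ(t) = 𝓕(x_t, ẋ_t) + 𝓖(x_t, ẋ_t)(u(t))` for `t ≥ 0`, `𝓗` is
Fréchet differentiable, `α` is continuous, strictly increasing with `α 0 = 0`, and
`D𝓗(x_t)(ẋ_t) ≥ -α(𝓗(x_t))` for all `t ≥ 0`, then `𝓗(x_0) ≥ 0` implies
`𝓗(x_t) ≥ 0` for all `t ≥ 0`. -/
theorem statement11 (E : Type*) [NormedAddCommGroup E] [NormedSpace ℝ E] [CompleteSpace E]
    (τ : ℝ) (hτ : 0 < τ) (m : ℕ)
    (F : C(Set.Icc (-τ) (0 : ℝ), E) → C(Set.Icc (-τ) (0 : ℝ), E) → E)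
    (G : C(Set.Icc (-τ) (0 : ℝ), E) → C(Set.Icc (-τ) (0 : ℝ), E) →
      (EuclideanSpace ℝ (Fin m) →L[ℝ] E))
    (u : ℝ → EuclideanSpace ℝ (Fin m))
    (x x' : ℝ → E) (hx : Continuous x) (hx' : Continuous x')
    (hd : ∀ t : ℝ, HasDerivAt x (x' t) t)
    (hode : ∀ t ≥ (0 : ℝ),
      x' t = F (histSegment τ x hx t) (histSegment τ x' hx' t) +
        G (histSegment τ x hx t) (histSegment τ x' hx' t) (u t))
    (H : C(Set.Icc (-τ) (0 : ℝ), E) → ℝ)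
    (DH : C(Set.Icc (-τ) (0 : ℝ), E) → (C(Set.Icc (-τ) (0 : ℝ), E) →L[ℝ] ℝ))
    (hH : ∀ φ : C(Set.Icc (-τ) (0 : ℝ), E), HasFDerivAt H (DH φ) φ)
    (α : ℝ → ℝ) (hα_cont : Continuous α) (hα_mono : StrictMono α) (hα0 : α 0 = 0)
    (hsafe : ∀ t ≥ (0 : ℝ),
      DH (histSegment τ x hx t) (histSegment τ x' hx' t) ≥ -α (H (histSegment τ x hx t)))
    (h0 : H (histSegment τ x hx 0) ≥ 0) :
    ∀ t ≥ (0 : ℝ), H (histSegment τ x hx t) ≥ 0 :=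
  statement11_general E τ x x' hx hx' hd H DH hH α hα_mono hα0 hsafe h0
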